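/- arXiv:2511.15373 — 3 statements merged into one kernel-verified Lean document; each statement's English description precedes it below -/
import Mathlib

section
/- Suppose G₁ and G₂ both maximize G ↦ ∏ᵢ₌₁ⁿ f_G(yᵢ) over all probability measures G on Θ, where f_G(y) = ∫ f(y|θ) dG(θ) and all values f_{G₁}(yᵢ), f_{G₂}(yᵢ) are strictly positive. Then f_{G₁}(yᵢ) = f_{G₂}(yᵢ) for every i = 1,...,n. -/
open MeasureTheory

private lemma amgm_aux {a b : ℝ} (ha : 0 ≤ a) (hb : 0 ≤ b) :
    Real.sqrt (a * b) ≤ (a + b) / 2 := by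
  rw [Real.sqrt_mul ha]
  nlinarith [sq_nonneg (Real.sqrt a - Real.sqrt b), Real.sq_sqrt ha, Real.sq_sqrt hb]

private lemma amgm_strict {a b : ℝ} (ha : 0 ≤ a) (hb : 0 ≤ b) (hne : a ≠ b) :
    Real.sqrt (a * b) < (a + b) / 2 := by
  rw [Real.sqrt_mul ha]
  have hs : Real.sqrt a ≠ Real.sqrt b := fun h => hne (by
    have := congrArg (fun x => x ^ 2) h
    simpa [Real.sq_sqrt ha, Real.sq_sqrt hb] using this)
  have h0 : 0 < (Real.sqrt a - Real.sqrt b) ^ 2 := sq_pos_of_ne_zero (sub_ne_zero.mpr hs)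
  nlinarith [Real.sq_sqrt ha, Real.sq_sqrt hb]

/-- Lemma 1: any two GMLE mixing measures give the same marginal
density values at all observed data points. -/
theorem stmt3 {Θ Y : Type*} [MeasurableSpace Θ] [MeasurableSpace Y]
    (f : Θ → Y → ℝ) (hf : ∀ y, Measurable fun θ => f θ y) (hfnn : ∀ θ y, 0 ≤ f θ y)
    (fG : Measure Θ → Y → ℝ)
    (hfG : ∀ (G : Measure Θ) (y : Y), fG G y = ∫ θ, f θ y ∂G)
    (n : ℕ) (y : Fin n → Y)
    (G₁ G₂ : Measure Θ) [IsProbabilityMeasure G₁] [IsProbabilityMeasure G₂]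
    (hmax₁ : ∀ (G : Measure Θ), IsProbabilityMeasure G →
      ∏ i, fG G (y i) ≤ ∏ i, fG G₁ (y i))
    (hmax₂ : ∀ (G : Measure Θ), IsProbabilityMeasure G →
      ∏ i, fG G (y i) ≤ ∏ i, fG G₂ (y i))
    (hpos₁ : ∀ i, 0 < fG G₁ (y i)) (hpos₂ : ∀ i, 0 < fG G₂ (y i)) :
    ∀ i, fG G₁ (y i) = fG G₂ (y i) := by
  set a : Fin n → ℝ := fun i => fG G₁ (y i) with ha
  set b : Fin n → ℝ := fun i => fG G₂ (y i) with hb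
  -- equal likelihoods
  have hPe : ∏ i, a i = ∏ i, b i :=
    le_antisymm (hmax₂ G₁ inferInstance) (hmax₁ G₂ inferInstance)
  -- integrability from positivity
  have hint₁ : ∀ i, Integrable (fun θ => f θ (y i)) G₁ := by
    intro i
    by_contra h
    have h0 : fG G₁ (y i) = 0 := by rw [hfG]; exact integral_undef h
    exact (hpos₁ i).ne' h0
  have hint₂ : ∀ i, Integrable (fun θ => f θ (y i)) G₂ := by
    intro i
    by_contra h
    have h0 : fG G₂ (y i) = 0 := by rw [hfG]; exact integral_undef h
    exact (hpos₂ i).ne' h0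
  -- the mixture measure
  set G : Measure Θ := (2 : ENNReal)⁻¹ • G₁ + (2 : ENNReal)⁻¹ • G₂ with hGdef
  have hGprob : IsProbabilityMeasure G := by
    constructor
    simp [hGdef, Measure.add_apply, ENNReal.inv_two_add_inv_two]
  have hmix : ∀ i, fG G (y i) = (a i + b i) / 2 := by
    intro i
    rw [hfG, hGdef]
    rw [integral_add_measure ((hint₁ i).smul_measure (by simp))
        ((hint₂ i).smul_measure (by simp))]
    rw [integral_smul_measure, integral_smul_measure]
    show _ = (fG G₁ (y i) + fG G₂ (y i)) / 2
    simp only [hfG, ENNReal.toReal_inv, ENNReal.toReal_ofNat, smul_eq_mul]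
    ring
  have hle : ∏ i, (a i + b i) / 2 ≤ ∏ i, a i := by
    have := hmax₁ G hGprob
    simpa [hmix] using this
  -- product of geometric means equals the common product
  have hsq : ∏ i, Real.sqrt (a i * b i) = ∏ i, a i := by
    have h1 : (∏ i, Real.sqrt (a i * b i)) ^ 2 = (∏ i, a i) ^ 2 := by
      rw [← Finset.prod_pow]
      have : ∀ i ∈ Finset.univ, Real.sqrt (a i * b i) ^ 2 = a i * b i := by
        intro i _
        exact Real.sq_sqrt (mul_nonneg (hpos₁ i).le (hpos₂ i).le)
      rw [Finset.prod_congr rfl this, Finset.prod_mul_distrib, ← hPe, sq]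
    have hnn1 : 0 ≤ ∏ i, Real.sqrt (a i * b i) :=
      Finset.prod_nonneg fun i _ => Real.sqrt_nonneg _
    have hnn2 : 0 ≤ ∏ i, a i := Finset.prod_nonneg fun i _ => (hpos₁ i).le
    nlinarith
  -- conclude each coordinate is equal
  intro j
  by_contra hne
  have hstrict : ∏ i, Real.sqrt (a i * b i) < ∏ i, (a i + b i) / 2 := by
    apply Finset.prod_lt_prod
    · intro i _
      exact Real.sqrt_pos.mpr (mul_pos (hpos₁ i) (hpos₂ i))
    · intro i _
      exact amgm_aux (hpos₁ i).le (hpos₂ i).le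
    · exact ⟨j, Finset.mem_univ j, amgm_strict (hpos₁ j).le (hpos₂ j).le hne⟩
  rw [hsq] at hstrict
  exact absurd (lt_of_lt_of_le hstrict hle) (lt_irrefl _)
end

section
/- Let A be a finite set and suppose the maps G ↦ f_G(y), y ∈ A, are affine in the probability measure G. If Ĝ₁ and Ĝ₂ are two maximizers of ∏ᵢ f_G(yᵢ) over all probability measures on Θ, the data y₁,...,yₙ cover all of A, and all f_{Ĝⱼ}(yᵢ) > 0, then for every function h : A → ℝ, Σ_{y∈A} h(y) f_{Ĝ₁}(y) = Σ_{y∈A} h(y) f_{Ĝ₂}(y). -/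
open MeasureTheory
open scoped ENNReal

/-- if the marginal map G ↦ f_G(y) is affine and the data cover the
finite set A, then any two GMLEs yield the same value of every linear functional
Σ h(y) f_G(y). -/
theorem stmt11 {Θ A : Type*} [MeasurableSpace Θ] [Fintype A]
    (fG : Measure Θ → A → ℝ)
    (haffine : ∀ (G₁ G₂ : Measure Θ), IsProbabilityMeasure G₁ →
      IsProbabilityMeasure G₂ → ∀ l : ℝ, l ∈ Set.Icc (0:ℝ) 1 → ∀ y : A,
        fG (ENNReal.ofReal l • G₁ + ENNReal.ofReal (1 - l) • G₂) y
          = l * fG G₁ y + (1 - l) * fG G₂ y)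
    (n : ℕ) (y : Fin n → A)
    (hcover : ∀ a : A, ∃ i, y i = a)
    (Ghat₁ Ghat₂ : Measure Θ) [IsProbabilityMeasure Ghat₁] [IsProbabilityMeasure Ghat₂]
    (hmax₁ : ∀ (G : Measure Θ), IsProbabilityMeasure G →
      ∏ i, fG G (y i) ≤ ∏ i, fG Ghat₁ (y i))
    (hmax₂ : ∀ (G : Measure Θ), IsProbabilityMeasure G →
      ∏ i, fG G (y i) ≤ ∏ i, fG Ghat₂ (y i))
    (hpos₁ : ∀ i, 0 < fG Ghat₁ (y i)) (hpos₂ : ∀ i, 0 < fG Ghat₂ (y i)) :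
    ∀ h : A → ℝ, ∑ a, h a * fG Ghat₁ a = ∑ a, h a * fG Ghat₂ a := by
  have hM : ∏ i, fG Ghat₂ (y i) = ∏ i, fG Ghat₁ (y i) :=
    le_antisymm (hmax₁ _ inferInstance) (hmax₂ _ inferInstance)
  set Gm : Measure Θ := ENNReal.ofReal ((1:ℝ)/2) • Ghat₁
      + ENNReal.ofReal (1 - (1:ℝ)/2) • Ghat₂ with hGm
  have hprob : IsProbabilityMeasure Gm := by
    constructor
    rw [hGm]
    simp only [Measure.add_apply, Measure.smul_apply, smul_eq_mul, measure_univ, mul_one]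
    rw [← ENNReal.ofReal_add (by norm_num) (by norm_num)]
    norm_num
  have hf : ∀ a, fG Gm a = (1/2) * fG Ghat₁ a + (1/2) * fG Ghat₂ a := by
    intro a
    have := haffine Ghat₁ Ghat₂ inferInstance inferInstance (1/2)
      (by constructor <;> norm_num) a
    rw [hGm, this]
    norm_num
  have hmid : ∏ i, fG Gm (y i) ≤ ∏ i, fG Ghat₁ (y i) := hmax₁ _ hprob
  have key : ∀ i, fG Ghat₁ (y i) = fG Ghat₂ (y i) := by
    by_contra hc
    push_neg at hc
    obtain ⟨j, hj⟩ := hc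
    have hmpos : ∀ i, 0 < fG Gm (y i) := by
      intro i; rw [hf]
      have := hpos₁ i; have := hpos₂ i; linarith
    have hsq : ∏ i, (fG Ghat₁ (y i) * fG Ghat₂ (y i)) < ∏ i, (fG Gm (y i))^2 := by
      apply Finset.prod_lt_prod
      · intro i _; exact mul_pos (hpos₁ i) (hpos₂ i)
      · intro i _; rw [hf]; nlinarith [sq_nonneg (fG Ghat₁ (y i) - fG Ghat₂ (y i))]
      · refine ⟨j, Finset.mem_univ j, ?_⟩
        rw [hf]
        nlinarith [sq_nonneg (fG Ghat₁ (y j) - fG Ghat₂ (y j)), sub_ne_zero.2 hj,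
          sq_pos_of_ne_zero (sub_ne_zero.2 hj)]
    have h1 : ∏ i, (fG Gm (y i))^2 = (∏ i, fG Gm (y i))^2 := by
      rw [Finset.prod_pow]
    have h2 : ∏ i, (fG Ghat₁ (y i) * fG Ghat₂ (y i))
        = (∏ i, fG Ghat₁ (y i)) * (∏ i, fG Ghat₂ (y i)) := Finset.prod_mul_distrib
    have hMpos : 0 < ∏ i, fG Ghat₁ (y i) := Finset.prod_pos fun i _ => hpos₁ i
    have hmprod : 0 < ∏ i, fG Gm (y i) := Finset.prod_pos fun i _ => hmpos i
    rw [h1, h2, hM] at hsq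
    nlinarith
  have hall : ∀ a, fG Ghat₁ a = fG Ghat₂ a := by
    intro a; obtain ⟨i, hi⟩ := hcover a; rw [← hi]; exact key i
  intro h
  exact Finset.sum_congr rfl fun a _ => by rw [hall a]
end

section
/- Let A be a compact metric space with a finite Borel measure μ of full support, and let (ψₙ), (φₙ) be sequences of functions A → ℝ that are uniformly equicontinuous (a single modulus of continuity works for all n) and uniformly bounded. Suppose for every δ > 0 there exists N such that for all n ≥ N and every y ∈ A there exists y' with d(y,y') < δ and ψₙ(y') = φₙ(y'). Then ∫_A ψₙ dμ − ∫_A φₙ dμ → 0 as n → ∞. -/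
open MeasureTheory Filter

lemma stmt14_cont {A : Type*} [MetricSpace A] (f : A → ℝ)
    (h : ∀ ε > 0, ∃ δ > 0, ∀ x y : A, dist x y < δ → |f x - f y| < ε) :
    Continuous f := by
  rw [Metric.continuous_iff]
  intro x ε hε
  obtain ⟨δ, hδ, hd⟩ := h ε hε
  exact ⟨δ, hδ, fun y hy => by
    simpa [Real.dist_eq] using hd y x hy⟩

/-- uniformly equicontinuous, uniformly bounded sequences that agree
on asymptotically dense sets have asymptotically equal integrals. -/
theorem stmt14 {A : Type*} [MetricSpace A] [CompactSpace A] [MeasurableSpace A]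
    [BorelSpace A]
    (μ : Measure A) [IsFiniteMeasure μ] [μ.IsOpenPosMeasure]
    (ψ φ : ℕ → A → ℝ)
    (hequi : ∀ ε > 0, ∃ δ > 0, ∀ n, ∀ x y : A, dist x y < δ →
      |ψ n x - ψ n y| < ε ∧ |φ n x - φ n y| < ε)
    (C : ℝ) (hbd : ∀ n x, |ψ n x| ≤ C ∧ |φ n x| ≤ C)
    (hagree : ∀ δ > 0, ∃ N, ∀ n ≥ N, ∀ y : A, ∃ y' : A,
      dist y y' < δ ∧ ψ n y' = φ n y') :
    Tendsto (fun n => (∫ y, ψ n y ∂μ) - ∫ y, φ n y ∂μ) atTop (nhds 0) := by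
  have hcψ : ∀ n, Continuous (ψ n) := fun n =>
    stmt14_cont _ (fun ε hε => by
      obtain ⟨δ, hδ, hd⟩ := hequi ε hε
      exact ⟨δ, hδ, fun x y h => (hd n x y h).1⟩)
  have hcφ : ∀ n, Continuous (φ n) := fun n =>
    stmt14_cont _ (fun ε hε => by
      obtain ⟨δ, hδ, hd⟩ := hequi ε hε
      exact ⟨δ, hδ, fun x y h => (hd n x y h).2⟩)
  have hiψ : ∀ n, Integrable (ψ n) μ := fun n =>
    (hcψ n).integrable_of_hasCompactSupport (HasCompactSupport.of_compactSpace _)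
  have hiφ : ∀ n, Integrable (φ n) μ := fun n =>
    (hcφ n).integrable_of_hasCompactSupport (HasCompactSupport.of_compactSpace _)
  rw [Metric.tendsto_atTop]
  intro ε hε
  set M : ℝ := (μ Set.univ).toReal + 1 with hM
  have hMt : (μ Set.univ).toReal < M := by rw [hM]; linarith [ENNReal.toReal_nonneg (a := μ Set.univ)]
  have hMt0 : 0 ≤ (μ Set.univ).toReal := ENNReal.toReal_nonneg
  clear_value M
  have hM0 : 0 < M := lt_of_le_of_lt hMt0 hMt
  have hε' : 0 < ε / (2 * M) := by positivity
  obtain ⟨δ, hδ, hd⟩ := hequi (ε / (2 * M)) hε'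
  obtain ⟨N, hN⟩ := hagree δ hδ
  refine ⟨N, fun n hn => ?_⟩
  have hpt : ∀ y, ‖ψ n y - φ n y‖ ≤ ε / M := by
    intro y
    obtain ⟨y', hy', heq⟩ := hN n hn y
    have h1 := (hd n y y' hy').1
    have h2 := (hd n y' y (by rwa [dist_comm])).2
    rw [Real.norm_eq_abs]
    calc |ψ n y - φ n y| = |(ψ n y - ψ n y') + (φ n y' - φ n y)| := by rw [heq]; ring_nf
      _ ≤ |ψ n y - ψ n y'| + |φ n y' - φ n y| := abs_add_le _ _
      _ ≤ ε / (2 * M) + ε / (2 * M) := le_of_lt (add_lt_add h1 h2)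
      _ = ε / M := by ring
  have hint : ‖∫ y, (ψ n y - φ n y) ∂μ‖ ≤ (ε / M) * (μ Set.univ).toReal :=
    norm_integral_le_of_norm_le_const (Filter.Eventually.of_forall hpt)
  rw [Real.dist_eq, sub_zero, ← integral_sub (hiψ n) (hiφ n)]
  calc |∫ y, (ψ n y - φ n y) ∂μ| ≤ (ε / M) * (μ Set.univ).toReal := hint
    _ < (ε / M) * M := mul_lt_mul_of_pos_left hMt (by positivity)
    _ = ε := div_mul_cancel₀ _ hM0.ne'
end
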